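/- arXiv:1303.6649 — 6 statements merged into one kernel-verified Lean document; each statement's English description precedes it below -/
import Mathlib

section
/- Let H be a complex Hilbert space and let K be a bounded selfadjoint operator on H, and for t ∈ ℝ set V(t) = exp(i t K) (a strongly continuous one-parameter group of unitaries whose generator K has spectrum bounded below, since K is bounded). Let E₁, E₂ be effects on H such that (i) E₁ E₂ = 0, and (ii) there is ε > 0 such that for all t with |t| < ε one has E₁ (V(t) E₂ V(t)*) = (V(t) E₂ V(t)*) E₁. Then E₁ V(t) E₂ V(t)* = 0 for all t ∈ ℝ. -/
/-!
For small `|t|` the operator `B = V t * E₂ * (V t)⋆` commutes with `E₁`, hence with the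
orthogonal projection `P` onto the closed range of `E₁`. As `P * E₂ = 0`, we get
`P * B = P * (V t - 1) * E₂ * (V t)⋆`, so `‖P (B y)‖ ≤ ‖V t - 1‖ * ‖B y‖`. Applied to `P y`
instead of `y` (using `P B P = P B`) this reads `‖P (B y)‖ ≤ ‖V t - 1‖ * ‖P (B y)‖`, which
forces `P * B = 0` once `‖V t - 1‖ < 1`; hence `E₁ * B = E₁ * P * B = 0`. Since `K` is
bounded, `z ↦ E₁ * exp (i z K) * E₂ * exp (-i z K)` is entire, and it vanishes near `0` on
the real axis, so it vanishes identically.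
-/

open ContinuousLinearMap Filter Topology Set NormedSpace Module.End

lemma mul_eq_zero_of_commute_of_norm_apply_le {R E : Type*} [Semiring R] [NormedAddCommGroup E]
    [Module R E] {P B : E →L[R] E} (hP : IsIdempotentElem P) (hPB : Commute P B) {c : ℝ}
    (hc : c < 1) (h : ∀ y, ‖P (B y)‖ ≤ c * ‖B y‖) : P * B = 0 := by
  ext y
  have hBP : B (P y) = P (B y) := congrArg (· y) hPB.eq.symm
  have hPP : P (P (B y)) = P (B y) := congrArg (· (B y)) hP.eq
  have hy := h (P y)
  rw [hBP, hPP] at hy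
  simpa using norm_le_zero_iff.mp (by nlinarith [norm_nonneg (P (B y))])

section RangeProjection

variable {𝕜 H : Type*} [RCLike 𝕜] [NormedAddCommGroup H] [InnerProductSpace 𝕜 H] [CompleteSpace H]

noncomputable def rangeProj (A : H →L[𝕜] H) : H →L[𝕜] H :=
  A.range.topologicalClosure.starProjection

lemma isStarProjection_rangeProj (A : H →L[𝕜] H) : IsStarProjection (rangeProj A) :=
  isStarProjection_starProjection (U := A.range.topologicalClosure)

lemma rangeProj_mul_self (A : H →L[𝕜] H) : rangeProj A * A = A := by
  ext x
  exact Submodule.starProjection_eq_self_iff.mpr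
    (A.range.le_topologicalClosure ⟨x, rfl⟩)

lemma mul_rangeProj_self {A : H →L[𝕜] H} (hA : IsSelfAdjoint A) : A * rangeProj A = A := by
  simpa [hA.star_eq, (isStarProjection_rangeProj A).isSelfAdjoint.star_eq] using
    congrArg star (rangeProj_mul_self A)

lemma mul_rangeProj_eq_zero {A B : H →L[𝕜] H} (h : B * A = 0) : B * rangeProj A = 0 := by
  have hker : A.range.topologicalClosure ≤ B.ker := by
    refine Submodule.topologicalClosure_minimal _ ?_ B.isClosed_ker
    rintro - ⟨x, rfl⟩
    simpa using congrArg (· x) h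
  ext x
  exact hker (Submodule.starProjection_apply_mem _ x)

lemma commute_rangeProj {A X : H →L[𝕜] H} (hX : IsSelfAdjoint X) (h : Commute X A) :
    Commute (rangeProj A) X := by
  have hinv : A.range.topologicalClosure ∈ invtSubmodule (X : H →ₗ[𝕜] H) := by
    refine Submodule.topologicalClosure_mem_invtSubmodule ?_
    rw [mem_invtSubmodule_iff_forall_mem_of_mem]
    rintro - ⟨y, rfl⟩
    exact ⟨X y, by simpa using congrArg (· y) h.symm⟩
  rw [(isStarProjection_rangeProj A).isIdempotentElem.commute_iff, rangeProj,
    Submodule.range_starProjection, Submodule.ker_starProjection]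
  exact ⟨hinv, orthogonal_mem_invtSubmodule (by rwa [hX.adjoint_eq])⟩

theorem mul_unitary_conj_eq_zero {E₁ E₂ U : H →L[𝕜] H} (hE₁ : IsSelfAdjoint E₁)
    (hE₂ : IsSelfAdjoint E₂) (horth : E₁ * E₂ = 0) (hU : U ∈ unitary (H →L[𝕜] H))
    (hcomm : Commute E₁ (U * E₂ * star U)) (hU1 : ‖U - 1‖ < 1) :
    E₁ * (U * E₂ * star U) = 0 := by
  set B := U * E₂ * star U
  set P := rangeProj E₁
  have hPE₂ : P * E₂ = 0 := by
    have hE₂E₁ : E₂ * E₁ = 0 := by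
      simpa [hE₁.star_eq, hE₂.star_eq] using congrArg star horth
    simpa [hE₂.star_eq, (isStarProjection_rangeProj E₁).isSelfAdjoint.star_eq] using
      congrArg star (mul_rangeProj_eq_zero hE₂E₁)
  have hbound (y : H) : ‖P (B y)‖ ≤ ‖U - 1‖ * ‖B y‖ := by
    set w := E₂ (star U y)
    have hBy : B y = U w := rfl
    have hPw : P w = 0 := congrArg (· (star U y)) hPE₂
    calc ‖P (B y)‖ = ‖P ((U - 1) w)‖ := by simp [hBy, hPw]
      _ ≤ ‖(U - 1) w‖ := Submodule.norm_starProjection_apply_le _ _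
      _ ≤ ‖U - 1‖ * ‖w‖ := (U - 1).le_opNorm w
      _ = ‖U - 1‖ * ‖B y‖ := by rw [hBy, norm_map_of_mem_unitary hU]
  have hPB : P * B = 0 :=
    mul_eq_zero_of_commute_of_norm_apply_le (isStarProjection_rangeProj E₁).isIdempotentElem
      (commute_rangeProj (hE₂.conjugate U) hcomm.symm) hU1 hbound
  rw [← mul_rangeProj_self hE₁, mul_assoc, hPB, mul_zero]

end RangeProjection

section Exponential

variable {A : Type*} [NormedRing A] [NormedAlgebra ℂ A]

lemma analyticOnNhd_exp_mul_smul [CompleteSpace A] (c : ℂ) (K : A) :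
    AnalyticOnNhd ℂ (fun z : ℂ => exp ((c * z) • K)) univ := fun _ _ =>
  (exp_analytic _).comp ((analyticAt_const.mul analyticAt_id).smul analyticAt_const)

lemma eventually_norm_exp_I_mul_smul_sub_one_lt [CompleteSpace A] (K : A) :
    ∀ᶠ t : ℝ in 𝓝 0, ‖exp ((Complex.I * t) • K) - 1‖ < 1 := by
  have hcont : Continuous fun t : ℝ => exp ((Complex.I * t) • K) :=
    (continuousOn_univ.mp (analyticOnNhd_exp_mul_smul _ K).continuousOn).comp
      Complex.continuous_ofReal
  have hlim : Tendsto (fun t : ℝ => exp ((Complex.I * t) • K)) (𝓝 0) (𝓝 1) := by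
    simpa using hcont.tendsto 0
  filter_upwards [hlim (Metric.ball_mem_nhds 1 one_pos)] with t ht
  simpa [dist_eq_norm] using ht

variable [StarRing A] [ContinuousStar A] [StarModule ℂ A] {K : A}

lemma IsSelfAdjoint.star_exp_I_mul_smul (hK : IsSelfAdjoint K) (t : ℝ) :
    star (NormedSpace.exp ((Complex.I * t) • K)) = NormedSpace.exp ((-Complex.I * t) • K) := by
  rw [star_exp, star_smul, hK.star_eq]
  simp

lemma IsSelfAdjoint.exp_I_mul_smul_mem_unitary [CompleteSpace A] (hK : IsSelfAdjoint K) (t : ℝ) :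
    NormedSpace.exp ((Complex.I * t) • K) ∈ unitary A :=
  let +nondep : NormedAlgebra ℚ A := .restrictScalars ℚ ℂ A
  exp_mem_unitary_of_mem_skewAdjoint (hK.smul_mem_skewAdjoint (by simp [skewAdjoint.mem_iff]))

end Exponential

theorem AnalyticOnNhd.eq_zero_of_eventually_ofReal_eq_zero {E : Type*} [NormedAddCommGroup E]
    [NormedSpace ℂ E] {f : ℂ → E} (hf : AnalyticOnNhd ℂ f univ)
    (h : ∀ᶠ t : ℝ in 𝓝 0, f t = 0) : f = 0 := by
  have hofReal : Tendsto ((↑) : ℝ → ℂ) (𝓝[≠] 0) (𝓝[≠] 0) :=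
    tendsto_nhdsWithin_of_tendsto_nhds_of_eventually_within _
      ((Complex.continuous_ofReal.tendsto' 0 0 Complex.ofReal_zero).mono_left nhdsWithin_le_nhds)
      (eventually_mem_nhdsWithin.mono fun _ ht => Complex.ofReal_ne_zero.mpr ht)
  funext z
  exact hf.eqOn_zero_of_preconnected_of_frequently_eq_zero isPreconnected_univ (mem_univ 0)
    (hofReal.frequently (h.filter_mono nhdsWithin_le_nhds).frequently) (mem_univ z)

theorem borchers_lemma_effects_general
    {H : Type*} [NormedAddCommGroup H] [InnerProductSpace ℂ H] [CompleteSpace H]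
    (K : H →L[ℂ] H) (hK : IsSelfAdjoint K)
    (V : ℝ → H →L[ℂ] H)
    (hV : ∀ t : ℝ, V t = NormedSpace.exp ((Complex.I * (t : ℂ)) • K))
    (E₁ E₂ : H →L[ℂ] H)
    (hE₁ : 0 ≤ E₁) (hE₂ : 0 ≤ E₂)
    (horth : E₁ * E₂ = 0)
    (hcomm : ∃ ε > (0 : ℝ), ∀ t : ℝ, |t| < ε →
      E₁ * (V t * E₂ * ContinuousLinearMap.adjoint (V t))
        = (V t * E₂ * ContinuousLinearMap.adjoint (V t)) * E₁) :
    ∀ t : ℝ, E₁ * (V t * E₂ * ContinuousLinearMap.adjoint (V t)) = 0 := by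
  simp only [← star_eq_adjoint] at hcomm ⊢
  obtain ⟨ε, hε, hcomm⟩ := hcomm
  let F : ℂ → H →L[ℂ] H := fun z =>
    E₁ * (exp ((Complex.I * z) • K) * E₂ * exp ((-Complex.I * z) • K))
  have hFV (t : ℝ) : F t = E₁ * (V t * E₂ * star (V t)) := by
    rw [hV, hK.star_exp_I_mul_smul]
  have hF : AnalyticOnNhd ℂ F univ := fun z hz =>
    analyticAt_const.mul (((analyticOnNhd_exp_mul_smul _ K z hz).mul analyticAt_const).mul
      (analyticOnNhd_exp_mul_smul _ K z hz))
  have hsmall : ∀ᶠ t : ℝ in 𝓝 0, F t = 0 := by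
    filter_upwards [eventually_norm_exp_I_mul_smul_sub_one_lt K, Metric.ball_mem_nhds 0 hε]
      with t ht1 htε
    rw [← hV] at ht1
    rw [hFV]
    refine mul_unitary_conj_eq_zero (.of_nonneg hE₁) (.of_nonneg hE₂) horth
      (hV t ▸ hK.exp_I_mul_smul_mem_unitary t) (hcomm t ?_) ht1
    simpa using htε
  intro t
  rw [← hFV, hF.eq_zero_of_eventually_ofReal_eq_zero hsmall, Pi.zero_apply]

/-- **Borchers' lemma, effect version, bounded generator.**
Let `K` be a bounded selfadjoint operator on a complex Hilbert space `H` and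
`V t = exp (i t K)` the associated one-parameter unitary group.  If `E₁, E₂`
are effects with `E₁ E₂ = 0` which commute after conjugating `E₂` by `V t`
for all sufficiently small `t`, then `E₁ (V t) E₂ (V t)* = 0` for all `t`. -/
theorem borchers_lemma_effects
    {H : Type*} [NormedAddCommGroup H] [InnerProductSpace ℂ H] [CompleteSpace H]
    (K : H →L[ℂ] H) (hK : IsSelfAdjoint K)
    (V : ℝ → H →L[ℂ] H)
    (hV : ∀ t : ℝ, V t = NormedSpace.exp ((Complex.I * (t : ℂ)) • K))
    (E₁ E₂ : H →L[ℂ] H)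
    (hE₁ : 0 ≤ E₁) (hE₁' : E₁ ≤ 1) (hE₂ : 0 ≤ E₂) (hE₂' : E₂ ≤ 1)
    (horth : E₁ * E₂ = 0)
    (hcomm : ∃ ε > (0 : ℝ), ∀ t : ℝ, |t| < ε →
      E₁ * (V t * E₂ * ContinuousLinearMap.adjoint (V t))
        = (V t * E₂ * ContinuousLinearMap.adjoint (V t)) * E₁) :
    ∀ t : ℝ, E₁ * (V t * E₂ * ContinuousLinearMap.adjoint (V t)) = 0 :=
  borchers_lemma_effects_general K hK V hV E₁ E₂ hE₁ hE₂ horth hcomm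
end

section
/- Let E and F be effects on a complex Hilbert space H. Then the following are equivalent: (a) E F = F E; (b) for every bounded operator T on H, √E √F T √F √E = √F √E T √E √F (i.e., the selective Lüders operations ρ ↦ √E ρ √E and ρ ↦ √F ρ √F commute as operations). -/
/-!
Write `a = √E`, `b = √F`. If `E` and `F` commute then so do `a` and `b`, and both sides of (b)
are `ab T ab`. Conversely, testing (b) on rank-one operators `T` shows that `ab = ν ba` for some
`ν ∈ ℂ`. Then `EF = ν² S` with `S = ab ba ≥ 0`, and since `EF = a (abb)` and `(abb) a = S` have
the same nonzero spectrum, `ν² ‖S‖ ∈ σ(S) ⊆ ℝ`, so `ν²` is real (or `S = 0`, i.e. `ab = 0`).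
Hence `FE = (EF)* = ν² S = EF`.
-/

open scoped InnerProductSpace

theorem ContinuousLinearMap.exists_eq_smul_of_forall_mul_mul_eq {𝕜 V : Type*} [RCLike 𝕜]
    [NormedAddCommGroup V] [InnerProductSpace 𝕜 V] {X Y Z W : V →L[𝕜] V} (hY : Y ≠ 0)
    (h : ∀ T, X * T * Y = Z * T * W) : ∃ ν : 𝕜, X = ν • Z := by
  obtain ⟨z, hz⟩ : ∃ z, Y z ≠ 0 := by
    by_contra! hc
    exact hY (ext hc)
  refine ⟨⟪Y z, W z⟫_𝕜 / ⟪Y z, Y z⟫_𝕜, ext fun x => ?_⟩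
  -- test `h` against the rank-one operator `v ↦ ⟪Y z, v⟫ • x`
  have hx : ⟪Y z, Y z⟫_𝕜 • X x = ⟪Y z, W z⟫_𝕜 • Z x := by
    simpa using congr($(h ((innerSL 𝕜 (Y z)).smulRight x)) z)
  rw [smul_apply, div_eq_inv_mul, mul_smul, ← hx, inv_smul_smul₀ (inner_self_ne_zero.mpr hz)]

section CStarAlgebra

variable {A : Type*} [CStarAlgebra A] [PartialOrder A] [StarOrderedRing A]

theorem im_eq_zero_of_mul_eq_smul_mul_comm {x y : A} {c : ℂ} (hyx : 0 ≤ y * x)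
    (hyx₀ : y * x ≠ 0) (hxy : x * y = c • (y * x)) : c.im = 0 := by
  -- `c ‖yx‖ ∈ σ(xy) \ {0} = σ(yx) \ {0} ⊆ ℝ`
  rcases eq_or_ne c 0 with rfl | hc
  · rfl
  have : Nontrivial A := ⟨⟨_, _, hyx₀⟩⟩
  have hnorm : (‖y * x‖ : ℂ) ∈ spectrum ℂ (y * x) := by
    simpa using spectrum.algebraMap_mem ℂ (CStarAlgebra.norm_mem_spectrum_of_nonneg hyx)
  have hmem : c * ‖y * x‖ ∈ spectrum ℂ (x * y) \ {0} := by
    refine ⟨?_, by simp [hc, hyx₀]⟩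
    rw [hxy]
    exact spectrum.smul_mem_smul_iff (r := Units.mk0 c hc) |>.mpr hnorm
  rw [spectrum.nonzero_mul_comm] at hmem
  have := (IsSelfAdjoint.of_nonneg hyx).im_eq_zero_of_mem_spectrum hmem.1
  simpa [Complex.mul_im, norm_ne_zero_iff.mpr hyx₀] using this

theorem commute_mul_self_of_mul_eq_smul_mul_comm {a b : A} {ν : ℂ} (ha : 0 ≤ a) (hb : 0 ≤ b)
    (hab : a * b = ν • (b * a)) : Commute (a * a) (b * b) := by
  have ha' := IsSelfAdjoint.of_nonneg ha
  have hb' := IsSelfAdjoint.of_nonneg hb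
  have hstar : star (b * a) = a * b := by rw [star_mul, ha'.star_eq, hb'.star_eq]
  have hswap : star (a * (a * b * b)) = b * b * (a * a) := by
    simp only [star_mul, ha'.star_eq, hb'.star_eq, mul_assoc]
  rw [commute_iff_eq, mul_assoc, ← mul_assoc a b b, ← hswap]
  rcases eq_or_ne (b * a) 0 with hba | hba
  · have hab₀ : a * b = 0 := by rw [← hstar, hba, star_zero]
    simp [hab₀]
  have hS : star (b * a) * (b * a) = a * b * b * a := by rw [hstar]; simp only [mul_assoc]
  have hS_nonneg : 0 ≤ a * b * b * a := hS ▸ star_mul_self_nonneg (b * a)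
  have hS₀ : a * b * b * a ≠ 0 := hS ▸ (CStarRing.star_mul_self_ne_zero_iff _).mpr hba
  have hprod : a * (a * b * b) = (ν * ν) • (a * b * b * a) :=
    calc a * (a * b * b) = a * (a * b) * b := by simp only [mul_assoc]
      _ = ν • (a * (b * a) * b) := by rw [hab, mul_smul_comm, smul_mul_assoc]
      _ = ν • (a * b * (a * b)) := by simp only [mul_assoc]
      _ = ν • (a * b * (ν • (b * a))) := by rw [← hab]
      _ = (ν * ν) • (a * b * b * a) := by
        rw [mul_smul_comm, smul_smul]; simp only [mul_assoc]
  have hreal : star (ν * ν) = ν * ν :=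
    Complex.conj_eq_iff_im.mpr <| im_eq_zero_of_mul_eq_smul_mul_comm hS_nonneg hS₀ hprod
  rw [hprod, star_smul, hreal, (IsSelfAdjoint.of_nonneg hS_nonneg).star_eq]

end CStarAlgebra

theorem commute_iff_lueders_operations_commute_general
    {H : Type*} [NormedAddCommGroup H] [InnerProductSpace ℂ H] [CompleteSpace H]
    (E F : H →L[ℂ] H) (hE : 0 ≤ E) (hF : 0 ≤ F) :
    E * F = F * E ↔
      ∀ T : H →L[ℂ] H,
        CFC.sqrt E * CFC.sqrt F * T * CFC.sqrt F * CFC.sqrt E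
          = CFC.sqrt F * CFC.sqrt E * T * CFC.sqrt E * CFC.sqrt F := by
  rw [← commute_iff_eq]
  constructor
  · intro hEF T
    have hsqrt : Commute (CFC.sqrt F) (CFC.sqrt E) := (hEF.cfcₙ_nnreal _).symm.cfcₙ_nnreal _
    simp only [mul_assoc, hsqrt.eq]
  · intro h
    have hstar : star (CFC.sqrt F * CFC.sqrt E) = CFC.sqrt E * CFC.sqrt F := by
      simp [star_mul, (IsSelfAdjoint.of_nonneg (CFC.sqrt_nonneg E)).star_eq,
        (IsSelfAdjoint.of_nonneg (CFC.sqrt_nonneg F)).star_eq]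
    obtain ⟨ν, hν⟩ : ∃ ν : ℂ, CFC.sqrt E * CFC.sqrt F = ν • (CFC.sqrt F * CFC.sqrt E) := by
      rcases eq_or_ne (CFC.sqrt F * CFC.sqrt E) 0 with h₀ | h₀
      · exact ⟨0, by rw [← hstar, h₀, star_zero, smul_zero]⟩
      · exact ContinuousLinearMap.exists_eq_smul_of_forall_mul_mul_eq h₀
          fun T => by simpa only [mul_assoc] using h T
    rw [← CFC.sqrt_mul_sqrt_self E hE, ← CFC.sqrt_mul_sqrt_self F hF]
    exact commute_mul_self_of_mul_eq_smul_mul_comm (CFC.sqrt_nonneg E) (CFC.sqrt_nonneg F) hν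

/-- For effects `E, F` on a complex Hilbert space, `E` and `F` commute iff the selective
Lüders operations `ρ ↦ √E ρ √E` and `ρ ↦ √F ρ √F` commute as operations, i.e.
`√E √F T √F √E = √F √E T √E √F` for every bounded operator `T`.  (Relativistic
objectivity is equivalent to local commutativity.) -/
theorem commute_iff_lueders_operations_commute
    {H : Type*} [NormedAddCommGroup H] [InnerProductSpace ℂ H] [CompleteSpace H]
    (E F : H →L[ℂ] H) (hE : 0 ≤ E) (hE' : E ≤ 1) (hF : 0 ≤ F) (hF' : F ≤ 1) :
    E * F = F * E ↔
      ∀ T : H →L[ℂ] H,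
        CFC.sqrt E * CFC.sqrt F * T * CFC.sqrt F * CFC.sqrt E
          = CFC.sqrt F * CFC.sqrt E * T * CFC.sqrt E * CFC.sqrt F :=
  commute_iff_lueders_operations_commute_general E F hE hF
end

section
/- (Schlieder–Malament theorem, projection version, bounded generators.) Let H be a complex Hilbert space, let H₀, K₁, K₂, K₃ be pairwise commuting bounded selfadjoint operators on H, and for a = (a₀,a₁,a₂,a₃) ∈ ℝ⁴ let U(a) = exp(i(a₀H₀ − a₁K₁ − a₂K₂ − a₃K₃)) be the associated unitary representation of the translation group (each generator being bounded, its spectrum is bounded below, so the relativistic spectrum condition holds in every timelike direction). Let P assign to each time t ∈ ℝ and each bounded set Δ ⊆ ℝ³ an orthogonal projection P(t,Δ) on H such that: (1) (covariance) U(a) P(t,Δ) U(a)* = P(t+a₀, Δ+(a₁,a₂,a₃)) for all a ∈ ℝ⁴; (2) (localizability) if Δ₁ ∩ Δ₂ = ∅ then P(t,Δ₁) P(t,Δ₂) = 0; (3) (local commutativity) if inf{‖x−y‖ : x ∈ Δ₁, y ∈ Δ₂} > |t₁ − t₂| then P(t₁,Δ₁) P(t₂,Δ₂) = P(t₂,Δ₂)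 P(t₁,Δ₁). Then P(t,Δ) = 0 for every t ∈ ℝ and every bounded Δ ⊆ ℝ³. -/
/-!
For `|s| < ‖v‖ - diam Δ` the projections `P(t,Δ)` and `P(t+s,Δ+v)` commute by local
commutativity, so their product is a projection. Its norm lies in `{0, 1}`, depends continuously
on `s`, and vanishes at `s = 0` by localizability; hence the product vanishes for all such `s`.
By covariance and unitarity, `P(t,Δ) U(s,v) P(t,Δ) = 0` on the nonempty open set
`diam Δ + |s| < ‖v‖`. Since `U(a) = exp(i G(a))` with `G(a) = a₀H₀ - Σ aⱼKⱼ` bounded and linear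
in `a`, the map `a ↦ U(a)` is real analytic on the connected space `ℝ⁴`, so the identity theorem
makes `P(t,Δ) U(a) P(t,Δ)` vanish everywhere, and `a = 0` gives `P(t,Δ) = 0`.
-/

open Bornology Set Complex NormedSpace

theorem IsStarProjection.norm_eq_zero_or_one {A : Type*} [NonUnitalNormedRing A] [StarRing A]
    [CStarRing A] {p : A} (hp : IsStarProjection p) : ‖p‖ = 0 ∨ ‖p‖ = 1 := by
  have h : ‖p‖ * ‖p‖ = ‖p‖ := by
    rw [← CStarRing.norm_star_mul_self, hp.isSelfAdjoint.star_eq, hp.isIdempotentElem.eq]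
  rcases eq_or_ne ‖p‖ 0 with h0 | h0
  · exact .inl h0
  · exact .inr (mul_left_cancel₀ h0 (h.trans (mul_one _).symm))

theorem IsPreconnected.eq_zero_of_isStarProjection {X A : Type*} [TopologicalSpace X]
    [NonUnitalNormedRing A] [StarRing A] [CStarRing A] {S : Set X} (hS : IsPreconnected S)
    {f : X → A} (hf : ContinuousOn f S) (hproj : ∀ x ∈ S, IsStarProjection (f x))
    {x₀ : X} (hx₀ : x₀ ∈ S) (h₀ : f x₀ = 0) {x : X} (hx : x ∈ S) : f x = 0 := by
  have hnorm : ‖f x‖ = ‖f x₀‖ :=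
    hS.constant_of_mapsTo (T := {0, 1}) (Set.toFinite _).isDiscrete hf.norm
      (fun y hy => (hproj y hy).norm_eq_zero_or_one) hx hx₀
  rwa [h₀, norm_zero, norm_eq_zero] at hnorm

theorem IsPreconnected.mul_eq_zero_of_commute {X A : Type*} [TopologicalSpace X]
    [NonUnitalNormedRing A] [StarRing A] [CStarRing A] {S : Set X} (hS : IsPreconnected S)
    {p : A} {q : X → A} (hp : IsStarProjection p) (hq : ∀ x ∈ S, IsStarProjection (q x))
    (hcomm : ∀ x ∈ S, Commute p (q x)) (hcont : ContinuousOn q S)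
    {x₀ : X} (hx₀ : x₀ ∈ S) (h₀ : p * q x₀ = 0) {x : X} (hx : x ∈ S) : p * q x = 0 :=
  hS.eq_zero_of_isStarProjection (continuousOn_const.mul hcont)
    (fun y hy => hp.mul (hq y hy) (hcomm y hy)) hx₀ h₀ hx

section Geometry

variable {E : Type*} [SeminormedAddCommGroup E] {Δ : Set E} {x y : E}

theorem norm_sub_diam_le_dist_add_right (hΔ : IsBounded Δ) (hx : x ∈ Δ) (hy : y ∈ Δ) (v : E) :
    ‖v‖ - Metric.diam Δ ≤ dist x (y + v) := by
  have := Metric.dist_le_diam_of_mem hΔ hy hx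
  have := dist_triangle y x (y + v)
  rw [dist_self_add_right] at this
  linarith

theorem inter_image_add_right_eq_empty (hΔ : IsBounded Δ) {v : E} (hv : Metric.diam Δ < ‖v‖) :
    Δ ∩ (· + v) '' Δ = ∅ := by
  refine Set.eq_empty_of_forall_notMem ?_
  rintro _ ⟨hx, y, hy, rfl⟩
  have := norm_sub_diam_le_dist_add_right hΔ hx hy v
  rw [dist_self] at this
  linarith

theorem isOpen_setOf_add_abs_lt_norm (D : ℝ) : IsOpen {p : ℝ × E | D + |p.1| < ‖p.2‖} :=
  isOpen_lt (continuous_const.add continuous_fst.abs) continuous_snd.norm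

end Geometry

theorem nonempty_setOf_add_abs_lt_norm {E : Type*} [NormedAddCommGroup E] [NormedSpace ℝ E]
    [Nontrivial E] (D : ℝ) : {p : ℝ × E | D + |p.1| < ‖p.2‖}.Nonempty := by
  obtain ⟨v, hv⟩ := NormedSpace.exists_lt_norm ℝ E D
  exact ⟨(0, v), by simpa using hv⟩

theorem mul_mul_eq_zero_of_mul_conj_eq_zero {R : Type*} [MonoidWithZero R] [StarMul R] {u p : R}
    (hu : star u * u = 1) (h : p * (u * p * star u) = 0) : p * u * p = 0 := by
  simpa only [mul_assoc, hu, mul_one, zero_mul] using congrArg (· * u) h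

section Localization

variable {E A : Type*} [SeminormedAddCommGroup E] [NonUnitalNormedRing A] [StarRing A]
  [CStarRing A] {P : ℝ → Set E → A}

theorem localization_mul_translate_eq_zero
    (hproj : ∀ t Δ, IsBounded Δ → IsStarProjection (P t Δ))
    (hloc : ∀ t Δ₁ Δ₂, IsBounded Δ₁ → IsBounded Δ₂ → Δ₁ ∩ Δ₂ = ∅ → P t Δ₁ * P t Δ₂ = 0)
    (hlc : ∀ t₁ t₂ Δ₁ Δ₂, IsBounded Δ₁ → IsBounded Δ₂ →
      (∃ d : ℝ, |t₁ - t₂| < d ∧ ∀ x ∈ Δ₁, ∀ y ∈ Δ₂, d ≤ dist x y) →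
      P t₁ Δ₁ * P t₂ Δ₂ = P t₂ Δ₂ * P t₁ Δ₁)
    {t : ℝ} {Δ : Set E} (hΔ : IsBounded Δ) {v : E}
    (hcont : Continuous fun s => P (t + s) ((· + v) '' Δ))
    {s : ℝ} (hs : Metric.diam Δ + |s| < ‖v‖) : P t Δ * P (t + s) ((· + v) '' Δ) = 0 := by
  have hΔv : IsBounded ((· + v) '' Δ) := (isometry_add_right v).lipschitz.isBounded_image hΔ
  set r := ‖v‖ - Metric.diam Δ
  have hr : 0 < r := by have := abs_nonneg s; linarith
  have hcomm : ∀ σ ∈ Ioo (-r) r, Commute (P t Δ) (P (t + σ) ((· + v) '' Δ)) := by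
    intro σ hσ
    refine hlc _ _ _ _ hΔ hΔv ⟨r, ?_, ?_⟩
    · rwa [sub_add_cancel_left, abs_neg, abs_lt]
    · rintro x hx _ ⟨y, hy, rfl⟩
      exact norm_sub_diam_le_dist_add_right hΔ hx hy v
  refine isPreconnected_Ioo.mul_eq_zero_of_commute (hproj t Δ hΔ)
    (fun σ _ => hproj _ _ hΔv) hcomm hcont.continuousOn (x₀ := 0) ⟨by linarith, hr⟩ ?_
    (abs_lt.mp (by linarith))
  rw [add_zero]
  exact hloc t _ _ hΔ hΔv (inter_image_add_right_eq_empty hΔ (by linarith))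

end Localization

section Generator

variable {A : Type*} [NormedRing A] [NormedAlgebra ℂ A] {ι : Type*} [Fintype ι]

def translationGenerator (H₀ : A) (K : ι → A) (p : ℝ × EuclideanSpace ℝ ι) : A :=
  (p.1 : ℂ) • H₀ - ∑ j, (p.2 j : ℂ) • K j

theorem analyticOnNhd_translationGenerator (H₀ : A) (K : ι → A) :
    AnalyticOnNhd ℝ (translationGenerator H₀ K) univ := by
  intro p _
  have hofReal : AnalyticOnNhd ℝ ((↑) : ℝ → ℂ) univ := fun x _ => ofRealCLM.analyticAt x
  exact (((hofReal _ trivial).comp analyticAt_fst).smul analyticAt_const).sub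
    (Finset.analyticAt_fun_sum _ fun j _ => ((hofReal _ trivial).comp
      (((EuclideanSpace.proj j).analyticAt _).comp analyticAt_snd)).smul analyticAt_const)

theorem isSelfAdjoint_translationGenerator [StarRing A] [StarModule ℂ A] {H₀ : A} {K : ι → A}
    (hH₀ : IsSelfAdjoint H₀) (hK : ∀ j, IsSelfAdjoint (K j)) (p : ℝ × EuclideanSpace ℝ ι) :
    IsSelfAdjoint (translationGenerator H₀ K p) :=
  have hofReal (r : ℝ) : IsSelfAdjoint (r : ℂ) := conj_ofReal r
  ((hofReal _).smul hH₀).sub (isSelfAdjoint_sum _ fun j _ => (hofReal _).smul (hK j))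

end Generator

theorem AnalyticOnNhd.exp_I_smul {E A : Type*} [NormedAddCommGroup E] [NormedSpace ℝ E]
    [NormedRing A] [NormedAlgebra ℂ A] [CompleteSpace A] {G : E → A} {s : Set E}
    (hG : AnalyticOnNhd ℝ G s) : AnalyticOnNhd ℝ (fun e => exp (I • G e)) s :=
  fun e he => (exp_analytic (𝕂 := ℂ) _).restrictScalars.comp ((hG e he).const_smul (c := I))

theorem AnalyticOnNhd.mul_mul_eq_zero_of_isOpen {E A : Type*} [NormedAddCommGroup E]
    [NormedSpace ℝ E] [NormedRing A] [NormedAlgebra ℝ A] {f : E → A}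
    (hf : AnalyticOnNhd ℝ f univ) {x y : A} {W : Set E} (hW : IsOpen W) (hWne : W.Nonempty)
    (h : ∀ e ∈ W, x * f e * y = 0) (e : E) : x * f e * y = 0 := by
  obtain ⟨e₀, he₀⟩ := hWne
  have hxfy : AnalyticOnNhd ℝ (fun e => x * f e * y) univ :=
    fun e he => (analyticAt_const.mul (hf e he)).mul analyticAt_const
  exact hxfy.eqOn_zero_of_preconnected_of_eventuallyEq_zero isPreconnected_univ (mem_univ e₀)
    (Filter.eventually_of_mem (hW.mem_nhds he₀) h) (mem_univ e)

theorem schlieder_malament_projections_general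
    {H : Type*} [NormedAddCommGroup H] [InnerProductSpace ℂ H] [CompleteSpace H]
    (H₀ : H →L[ℂ] H) (K : Fin 3 → (H →L[ℂ] H))
    (hH₀sa : IsSelfAdjoint H₀) (hKsa : ∀ j, IsSelfAdjoint (K j))
    (U : ℝ → EuclideanSpace ℝ (Fin 3) → (H →L[ℂ] H))
    (hU : ∀ (a₀ : ℝ) (v : EuclideanSpace ℝ (Fin 3)),
      U a₀ v = NormedSpace.exp
        (Complex.I • ((a₀ : ℂ) • H₀ - ∑ j, (v j : ℂ) • K j)))
    (P : ℝ → Set (EuclideanSpace ℝ (Fin 3)) → (H →L[ℂ] H))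
    -- each P(t,Δ) is an orthogonal projection
    (hproj : ∀ (t : ℝ) (Δ : Set (EuclideanSpace ℝ (Fin 3))), IsBounded Δ →
      IsSelfAdjoint (P t Δ) ∧ P t Δ * P t Δ = P t Δ)
    -- (1) translation covariance
    (hcov : ∀ (t : ℝ) (Δ : Set (EuclideanSpace ℝ (Fin 3))), IsBounded Δ →
      ∀ (a₀ : ℝ) (v : EuclideanSpace ℝ (Fin 3)),
        U a₀ v * P t Δ * ContinuousLinearMap.adjoint (U a₀ v)
          = P (t + a₀) ((fun x => x + v) '' Δ))
    -- (2) localizability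
    (hloc : ∀ (t : ℝ) (Δ₁ Δ₂ : Set (EuclideanSpace ℝ (Fin 3))),
      IsBounded Δ₁ → IsBounded Δ₂ → Δ₁ ∩ Δ₂ = ∅ → P t Δ₁ * P t Δ₂ = 0)
    -- (3) local commutativity for spacelike separated sets
    (hlc : ∀ (t₁ t₂ : ℝ) (Δ₁ Δ₂ : Set (EuclideanSpace ℝ (Fin 3))),
      IsBounded Δ₁ → IsBounded Δ₂ →
      (∃ d : ℝ, |t₁ - t₂| < d ∧ ∀ x ∈ Δ₁, ∀ y ∈ Δ₂, d ≤ dist x y) →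
      P t₁ Δ₁ * P t₂ Δ₂ = P t₂ Δ₂ * P t₁ Δ₁) :
    ∀ (t : ℝ) (Δ : Set (EuclideanSpace ℝ (Fin 3))), IsBounded Δ → P t Δ = 0 := by
  intro t Δ hΔ
  have hP : ∀ t Δ, IsBounded Δ → IsStarProjection (P t Δ) :=
    fun t Δ hΔ => ⟨(hproj t Δ hΔ).2, (hproj t Δ hΔ).1⟩
  have hUG : ∀ p : ℝ × EuclideanSpace ℝ (Fin 3),
      U p.1 p.2 = exp (I • translationGenerator H₀ K p) := fun p => hU p.1 p.2
  have hUan : AnalyticOnNhd ℝ (fun p : ℝ × EuclideanSpace ℝ (Fin 3) => U p.1 p.2) univ := by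
    simpa only [hUG] using (analyticOnNhd_translationGenerator H₀ K).exp_I_smul
  have hUunitary : ∀ s v, star (U s v) * U s v = 1 := fun s v =>
    Unitary.star_mul_self_of_mem <| hUG (s, v) ▸
      (selfAdjoint.expUnitary ⟨_, isSelfAdjoint_translationGenerator hH₀sa hKsa (s, v)⟩).prop
  have hconj : ∀ s v, U s v * P t Δ * star (U s v) = P (t + s) ((· + v) '' Δ) := fun s v => by
    rw [ContinuousLinearMap.star_eq_adjoint, hcov t Δ hΔ]
  have hvanish : ∀ p ∈ {p : ℝ × EuclideanSpace ℝ (Fin 3) | Metric.diam Δ + |p.1| < ‖p.2‖},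
      P t Δ * U p.1 p.2 * P t Δ = 0 := by
    rintro ⟨s, v⟩ hs
    have hUv : Continuous fun σ => U σ v :=
      hUan.continuous.comp (continuous_id.prodMk continuous_const)
    have hcont : Continuous fun σ => P (t + σ) ((· + v) '' Δ) := by
      simp_rw [← hconj]
      exact (hUv.mul continuous_const).mul (continuous_star.comp hUv)
    refine mul_mul_eq_zero_of_mul_conj_eq_zero (hUunitary s v) ?_
    rw [hconj]
    exact localization_mul_translate_eq_zero hP hloc hlc hΔ hcont hs
  have hU₀ : U 0 0 = 1 := by simp [hU]
  simpa [hU₀, (hP t Δ hΔ).isIdempotentElem.eq] using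
    hUan.mul_mul_eq_zero_of_isOpen (isOpen_setOf_add_abs_lt_norm _)
      (nonempty_setOf_add_abs_lt_norm _) hvanish (0, 0)

/-- **Schlieder–Malament theorem (projection version, bounded generators).**
A translation-covariant, localizable, locally commutative projection-valued localization
`(t, Δ) ↦ P(t,Δ)` over a unitary translation representation generated by pairwise
commuting bounded selfadjoint operators is trivial: `P(t,Δ) = 0` for every bounded `Δ`. -/
theorem schlieder_malament_projections
    {H : Type*} [NormedAddCommGroup H] [InnerProductSpace ℂ H] [CompleteSpace H]
    (H₀ : H →L[ℂ] H) (K : Fin 3 → (H →L[ℂ] H))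
    (hH₀sa : IsSelfAdjoint H₀) (hKsa : ∀ j, IsSelfAdjoint (K j))
    (hH₀K : ∀ j, Commute H₀ (K j)) (hKK : ∀ i j, Commute (K i) (K j))
    (U : ℝ → EuclideanSpace ℝ (Fin 3) → (H →L[ℂ] H))
    (hU : ∀ (a₀ : ℝ) (v : EuclideanSpace ℝ (Fin 3)),
      U a₀ v = NormedSpace.exp
        (Complex.I • ((a₀ : ℂ) • H₀ - ∑ j, (v j : ℂ) • K j)))
    (P : ℝ → Set (EuclideanSpace ℝ (Fin 3)) → (H →L[ℂ] H))
    -- each P(t,Δ) is an orthogonal projection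
    (hproj : ∀ (t : ℝ) (Δ : Set (EuclideanSpace ℝ (Fin 3))), IsBounded Δ →
      IsSelfAdjoint (P t Δ) ∧ P t Δ * P t Δ = P t Δ)
    -- (1) translation covariance
    (hcov : ∀ (t : ℝ) (Δ : Set (EuclideanSpace ℝ (Fin 3))), IsBounded Δ →
      ∀ (a₀ : ℝ) (v : EuclideanSpace ℝ (Fin 3)),
        U a₀ v * P t Δ * ContinuousLinearMap.adjoint (U a₀ v)
          = P (t + a₀) ((fun x => x + v) '' Δ))
    -- (2) localizability
    (hloc : ∀ (t : ℝ) (Δ₁ Δ₂ : Set (EuclideanSpace ℝ (Fin 3))),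
      IsBounded Δ₁ → IsBounded Δ₂ → Δ₁ ∩ Δ₂ = ∅ → P t Δ₁ * P t Δ₂ = 0)
    -- (3) local commutativity for spacelike separated sets
    (hlc : ∀ (t₁ t₂ : ℝ) (Δ₁ Δ₂ : Set (EuclideanSpace ℝ (Fin 3))),
      IsBounded Δ₁ → IsBounded Δ₂ →
      (∃ d : ℝ, |t₁ - t₂| < d ∧ ∀ x ∈ Δ₁, ∀ y ∈ Δ₂, d ≤ dist x y) →
      P t₁ Δ₁ * P t₂ Δ₂ = P t₂ Δ₂ * P t₁ Δ₁) :
    ∀ (t : ℝ) (Δ : Set (EuclideanSpace ℝ (Fin 3))), IsBounded Δ → P t Δ = 0 :=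
  schlieder_malament_projections_general H₀ K hH₀sa hKsa U hU P hproj hcov hloc hlc
end

section
/- (Schlieder's theorem for effects, bounded generators.) Let H be a complex Hilbert space, let H₀, K₁, K₂, K₃ be pairwise commuting bounded selfadjoint operators on H, and for a = (a₀,a₁,a₂,a₃) ∈ ℝ⁴ let U(a) = exp(i(a₀H₀ − a₁K₁ − a₂K₂ − a₃K₃)). Let E assign to each time t ∈ ℝ and each bounded set Δ ⊆ ℝ³ a bounded operator E(t,Δ) on H with 0 ≤ E(t,Δ) ≤ I (an effect), such that: (1) (covariance) U(a) E(t,Δ) U(a)* = E(t+a₀, Δ+(a₁,a₂,a₃)) for all a ∈ ℝ⁴; (2) (localizability) if Δ₁ ∩ Δ₂ = ∅ then E(t,Δ₁) E(t,Δ₂) = 0; (3) (local commutativity) if inf{‖x−y‖ : x ∈ Δ₁, y ∈ Δ₂} > |t₁ − t₂| then E(t₁,Δ₁) E(t₂,Δ₂) = E(t₂,Δ₂) E(t₁,Δ₁). Then E(t,Δ) = 0 for every t ∈ ℝ and every bounded Δ ⊆ ℝ³. -/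
/-!
With bounded generators, `z ↦ A * exp (z • T) * A` is an entire function of `z` for any bounded
operator `T`. Take `A = E(t,Δ)` and `T` the generator of spatial translations along a fixed
direction. For large real `r`, the translate `Δ + r e` is disjoint from `Δ`, so covariance and
localizability give `A * (U * A * U⋆) = 0` with `U = exp (r • T)` invertible, i.e. the entire
function vanishes on a real half-line. By the identity theorem it vanishes at `z = 0`, so
`A * A = 0`, and since the effect `A` is selfadjoint the C⋆-identity gives `A = 0`.
-/

open Bornology NormedSpace

theorem Bornology.IsBounded.exists_forall_le_norm_disjoint_image_add {F : Type*}
    [SeminormedAddCommGroup F] {Δ : Set F} (hΔ : IsBounded Δ) :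
    ∃ R : ℝ, ∀ v : F, R ≤ ‖v‖ → Disjoint Δ ((fun x => x + v) '' Δ) := by
  obtain ⟨M, hM⟩ := hΔ.subset_closedBall 0
  refine ⟨2 * M + 1, fun v hv => Set.disjoint_left.2 ?_⟩
  rintro _ hx ⟨y, hy, rfl⟩
  have hxM : ‖y + v‖ ≤ M := mem_closedBall_zero_iff.1 (hM hx)
  have hyM : ‖y‖ ≤ M := mem_closedBall_zero_iff.1 (hM hy)
  have : ‖v‖ ≤ ‖y + v‖ + ‖y‖ := by
    simpa using norm_sub_le (y + v) y
  linarith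

theorem AnalyticOnNhd.eq_zero_of_forall_ge_ofReal {E : Type*} [NormedAddCommGroup E]
    [NormedSpace ℂ E] {f : ℂ → E} (hf : AnalyticOnNhd ℂ f Set.univ) {R : ℝ}
    (h : ∀ r : ℝ, R ≤ r → f r = 0) : f = 0 := by
  have hofReal : Filter.Tendsto ((↑) : ℝ → ℂ) (nhdsWithin (R + 1) {R + 1}ᶜ)
      (nhdsWithin ((R + 1 : ℝ) : ℂ) {((R + 1 : ℝ) : ℂ)}ᶜ) :=
    Complex.continuous_ofReal.continuousWithinAt.tendsto_nhdsWithin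
      fun _ hr => Complex.ofReal_injective.ne hr
  have hge : ∀ᶠ r in nhdsWithin (R + 1) {R + 1}ᶜ, R ≤ r :=
    eventually_nhdsWithin_of_eventually_nhds (eventually_ge_nhds (by linarith))
  have hfreq := hofReal.frequently (p := fun z => f z = 0) (hge.mono h).frequently
  funext z
  exact hf.eqOn_zero_of_preconnected_of_frequently_eq_zero isPreconnected_univ
    (Set.mem_univ _) hfreq (Set.mem_univ z)

theorem mul_self_eq_zero_of_forall_ge_mul_exp_smul_mul {𝔸 : Type*} [NormedRing 𝔸]
    [NormedAlgebra ℂ 𝔸] [CompleteSpace 𝔸] {A T : 𝔸} {R : ℝ}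
    (h : ∀ r : ℝ, R ≤ r → A * exp ((r : ℂ) • T) * A = 0) : A * A = 0 := by
  have hf : AnalyticOnNhd ℂ (fun z : ℂ => A * exp (z • T) * A) Set.univ := by
    intro z _
    have hexp : AnalyticAt ℂ (fun z : ℂ => exp (z • T)) z :=
      (exp_analytic (z • T)).comp (f := fun z : ℂ => z • T) (analyticAt_id.smul analyticAt_const)
    exact (analyticAt_const.mul hexp).mul analyticAt_const
  simpa using congrFun (hf.eq_zero_of_forall_ge_ofReal h) 0

theorem IsSelfAdjoint.eq_zero_of_mul_self_eq_zero {𝔸 : Type*} [NonUnitalNormedRing 𝔸]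
    [StarRing 𝔸] [CStarRing 𝔸] {A : 𝔸} (hA : IsSelfAdjoint A) (h : A * A = 0) : A = 0 :=
  (CStarRing.star_mul_self_eq_zero_iff A).1 (by rwa [hA.star_eq])

theorem schlieder_theorem_effects_general
    {H : Type*} [NormedAddCommGroup H] [InnerProductSpace ℂ H] [CompleteSpace H]
    (H₀ : H →L[ℂ] H) (K : Fin 3 → (H →L[ℂ] H))
    (U : ℝ → EuclideanSpace ℝ (Fin 3) → (H →L[ℂ] H))
    (hU : ∀ (a₀ : ℝ) (v : EuclideanSpace ℝ (Fin 3)),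
      U a₀ v = NormedSpace.exp
        (Complex.I • ((a₀ : ℂ) • H₀ - ∑ j, (v j : ℂ) • K j)))
    (E : ℝ → Set (EuclideanSpace ℝ (Fin 3)) → (H →L[ℂ] H))
    -- each E(t,Δ) is an effect
    (heff : ∀ (t : ℝ) (Δ : Set (EuclideanSpace ℝ (Fin 3))), IsBounded Δ →
      0 ≤ E t Δ ∧ E t Δ ≤ 1)
    -- (1) translation covariance
    (hcov : ∀ (t : ℝ) (Δ : Set (EuclideanSpace ℝ (Fin 3))), IsBounded Δ →
      ∀ (a₀ : ℝ) (v : EuclideanSpace ℝ (Fin 3)),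
        U a₀ v * E t Δ * ContinuousLinearMap.adjoint (U a₀ v)
          = E (t + a₀) ((fun x => x + v) '' Δ))
    -- (2) localizability
    (hloc : ∀ (t : ℝ) (Δ₁ Δ₂ : Set (EuclideanSpace ℝ (Fin 3))),
      IsBounded Δ₁ → IsBounded Δ₂ → Δ₁ ∩ Δ₂ = ∅ → E t Δ₁ * E t Δ₂ = 0) :
    ∀ (t : ℝ) (Δ : Set (EuclideanSpace ℝ (Fin 3))), IsBounded Δ → E t Δ = 0 := by
  intro t Δ hΔ
  let +nondep : NormedAlgebra ℚ (H →L[ℂ] H) := .restrictScalars ℚ ℂ (H →L[ℂ] H)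
  obtain ⟨R, hR⟩ := hΔ.exists_forall_le_norm_disjoint_image_add
  set w : EuclideanSpace ℝ (Fin 3) := EuclideanSpace.single 0 1
  set T : H →L[ℂ] H := -(Complex.I • ∑ j, (w j : ℂ) • K j)
  have hUT : ∀ r : ℝ, U 0 (r • w) = exp ((r : ℂ) • T) := by
    intro r
    simp only [hU, T, PiLp.smul_apply, smul_eq_mul, Complex.ofReal_mul, mul_smul,
      ← Finset.smul_sum, Complex.ofReal_zero, zero_smul, zero_sub, smul_neg, smul_comm _ Complex.I]
  refine (heff t Δ hΔ).1.isSelfAdjoint.eq_zero_of_mul_self_eq_zero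
    (mul_self_eq_zero_of_forall_ge_mul_exp_smul_mul (T := T) (R := R) fun r hr => ?_)
  have hrw : R ≤ ‖r • w‖ := by simpa [w, norm_smul] using hr.trans (le_abs_self r)
  have hdisj := hloc t Δ _ hΔ ((isometry_add_right _).lipschitz.isBounded_image hΔ)
    (Set.disjoint_iff_inter_eq_empty.1 (hR _ hrw))
  have hconj := hcov t Δ hΔ 0 (r • w)
  rw [add_zero] at hconj
  rwa [← hconj, hUT, ← ContinuousLinearMap.star_eq_adjoint, ← mul_assoc,
    ← mul_assoc, (isUnit_exp _).star.mul_left_eq_zero] at hdisj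

/-- **Schlieder's theorem for effects (bounded generators).**
A translation-covariant, localizable, locally commutative effect-valued localization
`(t, Δ) ↦ E(t,Δ)` over a unitary translation representation generated by pairwise
commuting bounded selfadjoint operators is trivial: `E(t,Δ) = 0` for every bounded `Δ`. -/
theorem schlieder_theorem_effects
    {H : Type*} [NormedAddCommGroup H] [InnerProductSpace ℂ H] [CompleteSpace H]
    (H₀ : H →L[ℂ] H) (K : Fin 3 → (H →L[ℂ] H))
    (hH₀sa : IsSelfAdjoint H₀) (hKsa : ∀ j, IsSelfAdjoint (K j))
    (hH₀K : ∀ j, Commute H₀ (K j)) (hKK : ∀ i j, Commute (K i) (K j))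
    (U : ℝ → EuclideanSpace ℝ (Fin 3) → (H →L[ℂ] H))
    (hU : ∀ (a₀ : ℝ) (v : EuclideanSpace ℝ (Fin 3)),
      U a₀ v = NormedSpace.exp
        (Complex.I • ((a₀ : ℂ) • H₀ - ∑ j, (v j : ℂ) • K j)))
    (E : ℝ → Set (EuclideanSpace ℝ (Fin 3)) → (H →L[ℂ] H))
    -- each E(t,Δ) is an effect
    (heff : ∀ (t : ℝ) (Δ : Set (EuclideanSpace ℝ (Fin 3))), IsBounded Δ →
      0 ≤ E t Δ ∧ E t Δ ≤ 1)
    -- (1) translation covariance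
    (hcov : ∀ (t : ℝ) (Δ : Set (EuclideanSpace ℝ (Fin 3))), IsBounded Δ →
      ∀ (a₀ : ℝ) (v : EuclideanSpace ℝ (Fin 3)),
        U a₀ v * E t Δ * ContinuousLinearMap.adjoint (U a₀ v)
          = E (t + a₀) ((fun x => x + v) '' Δ))
    -- (2) localizability
    (hloc : ∀ (t : ℝ) (Δ₁ Δ₂ : Set (EuclideanSpace ℝ (Fin 3))),
      IsBounded Δ₁ → IsBounded Δ₂ → Δ₁ ∩ Δ₂ = ∅ → E t Δ₁ * E t Δ₂ = 0)
    -- (3) local commutativity for spacelike separated sets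
    (hlc : ∀ (t₁ t₂ : ℝ) (Δ₁ Δ₂ : Set (EuclideanSpace ℝ (Fin 3))),
      IsBounded Δ₁ → IsBounded Δ₂ →
      (∃ d : ℝ, |t₁ - t₂| < d ∧ ∀ x ∈ Δ₁, ∀ y ∈ Δ₂, d ≤ dist x y) →
      E t₁ Δ₁ * E t₂ Δ₂ = E t₂ Δ₂ * E t₁ Δ₁) :
    ∀ (t : ℝ) (Δ : Set (EuclideanSpace ℝ (Fin 3))), IsBounded Δ → E t Δ = 0 :=
  schlieder_theorem_effects_general H₀ K U hU E heff hcov hloc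
end

section
/- (Generalized Schlieder theorem for strongly unsharp localization, bounded generators.) Let H be a complex Hilbert space, let H₀, K₁, K₂, K₃ be pairwise commuting bounded selfadjoint operators on H, and for a = (a₀,a₁,a₂,a₃) ∈ ℝ⁴ let U(a) = exp(i(a₀H₀ − a₁K₁ − a₂K₂ − a₃K₃)). Let E assign to each time t ∈ ℝ and each bounded set Δ ⊆ ℝ³ a bounded operator E(t,Δ) on H with 0 ≤ E(t,Δ) ≤ I (an effect), such that: (1) (covariance) U(a) E(t,Δ) U(a)* = E(t+a₀, Δ+(a₁,a₂,a₃)) for all a ∈ ℝ⁴; (2') (weak localizability) if Δ₁ ∩ Δ₂ = ∅ then every φ ∈ H with E(t,Δ₁)φ = φ satisfies E(t,Δ₂)φ = 0; (3) (local commutativity) if inf{‖x−y‖ : x ∈ Δ₁, y ∈ Δ₂} > |t₁ − t₂| then E(t₁,Δ₁) E(t₂,Δ₂) = E(t₂,Δ₂) E(t₁,Δ₁). Then for every t ∈ ℝ and every bounded Δ ⊆ ℝ³ the effect E(t,Δ) has no eigenvalue 1: E(t,Δ)φ = φ implies φ = 0. -/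
/-!
Because the generators are bounded, `s ↦ ⟪φ, U(0, s w)* φ⟫` is real analytic for a unit vector
`w`. If `E(t,Δ) φ = φ`, then for `s > diam Δ` the translate `Δ + s w` is disjoint from `Δ`, so
weak localizability and covariance give `E(t,Δ) U(0, s w)* φ = 0`, whence the matrix element
vanishes for all large `s`. By analyticity it vanishes at `s = 0`, where it equals `‖φ‖²`.
-/

open Bornology NormedSpace
open Complex (I conj_I conj_ofReal ofReal_mul ofReal_zero ofRealCLM star_def)
open ContinuousLinearMap (adjoint adjoint_inner_left star_eq_adjoint)

section Geometry

variable {E : Type*} [SeminormedAddCommGroup E]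

theorem Bornology.IsBounded.image_add_right {s : Set E} (hs : IsBounded s) (v : E) :
    IsBounded ((· + v) '' s) := by
  convert hs.vadd v using 1
  ext x
  simp only [Set.mem_image, Set.mem_vadd_set, vadd_eq_add, add_comm v]

theorem disjoint_image_add_right_of_diam_lt {s : Set E} (hs : IsBounded s) {v : E}
    (hv : Metric.diam s < ‖v‖) : Disjoint s ((· + v) '' s) := by
  refine Set.disjoint_left.mpr fun x hx ⟨y, hy, hyx⟩ => hv.not_ge ?_
  calc ‖v‖ = dist x y := by rw [← hyx, dist_eq_norm, add_sub_cancel_left]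
    _ ≤ Metric.diam s := Metric.dist_le_diam_of_mem hs hx hy

end Geometry

theorem isSelfAdjoint_sum_ofReal_smul {A ι : Type*} [AddCommMonoid A] [StarAddMonoid A]
    [Module ℂ A] [StarModule ℂ A] [Fintype ι] {K : ι → A} (hK : ∀ j, IsSelfAdjoint (K j))
    (v : ι → ℝ) : IsSelfAdjoint (∑ j, (v j : ℂ) • K j) :=
  isSelfAdjoint_sum _ fun j _ => IsSelfAdjoint.smul (conj_ofReal (v j)) (hK j)

section SelfAdjoint

variable {A : Type*} [NormedRing A] [NormedAlgebra ℂ A] [StarRing A] [ContinuousStar A]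
  [StarModule ℂ A] {a : A}

theorem IsSelfAdjoint.exp_I_smul_mem_unitary [CompleteSpace A] (ha : IsSelfAdjoint a) :
    NormedSpace.exp (I • a) ∈ unitary A :=
  (selfAdjoint.expUnitary ⟨a, ha⟩).prop

theorem IsSelfAdjoint.star_exp_I_smul (ha : IsSelfAdjoint a) :
    star (NormedSpace.exp (I • a)) = NormedSpace.exp (I • -a) := by
  rw [star_exp, star_smul, ha.star_eq, star_def, conj_I, neg_smul, smul_neg]

end SelfAdjoint

section Exponential

variable {H : Type*} [NormedAddCommGroup H] [InnerProductSpace ℂ H] [CompleteSpace H]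

theorem analyticAt_inner_exp_ofReal_smul_apply (A : H →L[ℂ] H) (φ ψ : H) (x : ℝ) :
    AnalyticAt ℝ (fun s : ℝ => inner ℂ φ (exp ((s : ℂ) • A) ψ)) x := by
  let L : (H →L[ℂ] H) →L[ℂ] ℂ := (innerSL ℂ φ).comp (ContinuousLinearMap.apply ℂ H ψ)
  have hℂ : AnalyticAt ℂ (fun z : ℂ => L (exp (z • A))) (x : ℂ) :=
    (L.analyticAt _).comp ((exp_analytic _).comp
      (((1 : ℂ →L[ℂ] ℂ).smulRight A).analyticAt _))
  exact hℂ.restrictScalars.comp (ofRealCLM.analyticAt x)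

theorem eq_zero_of_inner_exp_ofReal_smul_apply_eq_zero (A : H →L[ℂ] H) {φ : H} {r : ℝ}
    (h : ∀ s > r, inner ℂ φ (exp ((s : ℂ) • A) φ) = 0) : φ = 0 := by
  have hev : (fun s : ℝ => inner ℂ φ (exp ((s : ℂ) • A) φ)) =ᶠ[nhds (r + 1)] 0 := by
    filter_upwards [Ioi_mem_nhds (lt_add_one r)] with s hs using h s hs
  have hzero := AnalyticOnNhd.eqOn_zero_of_preconnected_of_eventuallyEq_zero
    (fun x _ => analyticAt_inner_exp_ofReal_smul_apply A φ φ x) isPreconnected_univ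
    (Set.mem_univ _) hev (Set.mem_univ 0)
  simpa using hzero

theorem inner_adjoint_apply_eq_zero_of_conj_apply_eq_zero {E W : H →L[ℂ] H}
    (hE : IsSelfAdjoint E) (hW : W ∈ unitary (H →L[ℂ] H)) {φ : H} (hφ : E φ = φ)
    (h : (W * E * adjoint W) φ = 0) :
    inner ℂ φ (adjoint W φ) = 0 := by
  have hEW : E (adjoint W φ) = 0 := by
    have hWW : adjoint W * W = 1 := by
      rw [← star_eq_adjoint, Unitary.star_mul_self_of_mem hW]
    calc E (adjoint W φ) = (adjoint W * W) (E (adjoint W φ)) := by rw [hWW]; rfl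
      _ = adjoint W ((W * E * adjoint W) φ) := rfl
      _ = 0 := by rw [h, map_zero]
  calc inner ℂ φ (adjoint W φ) = inner ℂ (adjoint E φ) (adjoint W φ) := by
        rw [hE.adjoint_eq, hφ]
    _ = 0 := by rw [adjoint_inner_left, hEW, inner_zero_right]

end Exponential

theorem schlieder_theorem_strongly_unsharp_general
    {H : Type*} [NormedAddCommGroup H] [InnerProductSpace ℂ H] [CompleteSpace H]
    (H₀ : H →L[ℂ] H) (K : Fin 3 → (H →L[ℂ] H))
    (hKsa : ∀ j, IsSelfAdjoint (K j))
    (U : ℝ → EuclideanSpace ℝ (Fin 3) → (H →L[ℂ] H))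
    (hU : ∀ (a₀ : ℝ) (v : EuclideanSpace ℝ (Fin 3)),
      U a₀ v = NormedSpace.exp
        (Complex.I • ((a₀ : ℂ) • H₀ - ∑ j, (v j : ℂ) • K j)))
    (E : ℝ → Set (EuclideanSpace ℝ (Fin 3)) → (H →L[ℂ] H))
    -- each E(t,Δ) is an effect
    (heff : ∀ (t : ℝ) (Δ : Set (EuclideanSpace ℝ (Fin 3))), IsBounded Δ →
      0 ≤ E t Δ ∧ E t Δ ≤ 1)
    -- (1) translation covariance
    (hcov : ∀ (t : ℝ) (Δ : Set (EuclideanSpace ℝ (Fin 3))), IsBounded Δ →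
      ∀ (a₀ : ℝ) (v : EuclideanSpace ℝ (Fin 3)),
        U a₀ v * E t Δ * ContinuousLinearMap.adjoint (U a₀ v)
          = E (t + a₀) ((fun x => x + v) '' Δ))
    -- (2') weak localizability
    (hloc : ∀ (t : ℝ) (Δ₁ Δ₂ : Set (EuclideanSpace ℝ (Fin 3))),
      IsBounded Δ₁ → IsBounded Δ₂ → Δ₁ ∩ Δ₂ = ∅ →
      ∀ φ : H, E t Δ₁ φ = φ → E t Δ₂ φ = 0) :
    ∀ (t : ℝ) (Δ : Set (EuclideanSpace ℝ (Fin 3))), IsBounded Δ →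
      ∀ φ : H, E t Δ φ = φ → φ = 0 := by
  intro t Δ hΔ φ hφ
  have hE : IsSelfAdjoint (E t Δ) :=
    ((ContinuousLinearMap.nonneg_iff_isPositive _).mp (heff t Δ hΔ).1).isSelfAdjoint
  obtain ⟨w, hw⟩ := exists_norm_eq (EuclideanSpace ℝ (Fin 3)) zero_le_one
  set P := ∑ j, (w j : ℂ) • K j
  refine eq_zero_of_inner_exp_ofReal_smul_apply_eq_zero (I • P) (r := Metric.diam Δ)
    fun s hs => ?_
  have hsP : IsSelfAdjoint (-((s : ℂ) • P)) :=
    (IsSelfAdjoint.smul (conj_ofReal s) (isSelfAdjoint_sum_ofReal_smul hKsa w)).neg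
  have hUsw : U 0 (s • w) = exp (I • -((s : ℂ) • P)) := by
    have hsum : ∑ j, ((s • w) j : ℂ) • K j = (s : ℂ) • P := by
      simp only [PiLp.smul_apply, smul_eq_mul, ofReal_mul, P, Finset.smul_sum, smul_smul]
    rw [hU, hsum, ofReal_zero, zero_smul, zero_sub]
  have hfar : Metric.diam Δ < ‖s • w‖ := by
    rwa [norm_smul, hw, mul_one, Real.norm_of_nonneg (Metric.diam_nonneg.trans hs.le)]
  have hconj : (U 0 (s • w) * E t Δ * adjoint (U 0 (s • w))) φ = 0 := by
    rw [hcov t Δ hΔ 0 (s • w), add_zero]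
    exact hloc t Δ _ hΔ (hΔ.image_add_right _)
      (disjoint_image_add_right_of_diam_lt hΔ hfar).inter_eq φ hφ
  have key := inner_adjoint_apply_eq_zero_of_conj_apply_eq_zero hE
    (hUsw ▸ hsP.exp_I_smul_mem_unitary) hφ hconj
  rwa [← star_eq_adjoint, hUsw, hsP.star_exp_I_smul, neg_neg,
    smul_comm] at key

/-- **Generalized Schlieder theorem for strongly unsharp localization (bounded
generators).**  A translation-covariant, weakly localizable, locally commutative
effect-valued localization `(t, Δ) ↦ E(t,Δ)` over a unitary translation representation
generated by pairwise commuting bounded selfadjoint operators is strongly unsharp: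
no `E(t,Δ)` with bounded `Δ` has eigenvalue `1`. -/
theorem schlieder_theorem_strongly_unsharp
    {H : Type*} [NormedAddCommGroup H] [InnerProductSpace ℂ H] [CompleteSpace H]
    (H₀ : H →L[ℂ] H) (K : Fin 3 → (H →L[ℂ] H))
    (hH₀sa : IsSelfAdjoint H₀) (hKsa : ∀ j, IsSelfAdjoint (K j))
    (hH₀K : ∀ j, Commute H₀ (K j)) (hKK : ∀ i j, Commute (K i) (K j))
    (U : ℝ → EuclideanSpace ℝ (Fin 3) → (H →L[ℂ] H))
    (hU : ∀ (a₀ : ℝ) (v : EuclideanSpace ℝ (Fin 3)),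
      U a₀ v = NormedSpace.exp
        (Complex.I • ((a₀ : ℂ) • H₀ - ∑ j, (v j : ℂ) • K j)))
    (E : ℝ → Set (EuclideanSpace ℝ (Fin 3)) → (H →L[ℂ] H))
    -- each E(t,Δ) is an effect
    (heff : ∀ (t : ℝ) (Δ : Set (EuclideanSpace ℝ (Fin 3))), IsBounded Δ →
      0 ≤ E t Δ ∧ E t Δ ≤ 1)
    -- (1) translation covariance
    (hcov : ∀ (t : ℝ) (Δ : Set (EuclideanSpace ℝ (Fin 3))), IsBounded Δ →
      ∀ (a₀ : ℝ) (v : EuclideanSpace ℝ (Fin 3)),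
        U a₀ v * E t Δ * ContinuousLinearMap.adjoint (U a₀ v)
          = E (t + a₀) ((fun x => x + v) '' Δ))
    -- (2') weak localizability
    (hloc : ∀ (t : ℝ) (Δ₁ Δ₂ : Set (EuclideanSpace ℝ (Fin 3))),
      IsBounded Δ₁ → IsBounded Δ₂ → Δ₁ ∩ Δ₂ = ∅ →
      ∀ φ : H, E t Δ₁ φ = φ → E t Δ₂ φ = 0)
    -- (3) local commutativity for spacelike separated sets
    (hlc : ∀ (t₁ t₂ : ℝ) (Δ₁ Δ₂ : Set (EuclideanSpace ℝ (Fin 3))),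
      IsBounded Δ₁ → IsBounded Δ₂ →
      (∃ d : ℝ, |t₁ - t₂| < d ∧ ∀ x ∈ Δ₁, ∀ y ∈ Δ₂, d ≤ dist x y) →
      E t₁ Δ₁ * E t₂ Δ₂ = E t₂ Δ₂ * E t₁ Δ₁) :
    ∀ (t : ℝ) (Δ : Set (EuclideanSpace ℝ (Fin 3))), IsBounded Δ →
      ∀ φ : H, E t Δ φ = φ → φ = 0 :=
  schlieder_theorem_strongly_unsharp_general H₀ K hKsa U hU E heff hcov hloc
end

section
/- (Strong causality implies local commutativity for sharp localization.) Let H be a complex Hilbert space and let P assign to each time t ∈ ℝ and each bounded set Δ ⊆ ℝ³ an orthogonal projection P(t,Δ) on H such that: (localizability) if Δ₁ ∩ Δ₂ = ∅ then P(t,Δ₁) P(t,Δ₂) = 0; and (strong causality) for all t, t' ∈ ℝ and bounded Δ, P(t,Δ) ≤ P(t', Δ_{|t'−t|}), where Δ_s := {x ∈ ℝ³ : dist(x, Δ) ≤ s} is the inflated set. Then for any two spacelike separated sets, i.e., whenever inf{‖x−y‖ : x ∈ Δ₁, y ∈ Δ₂} > |t₁ − t₂|, one has P(t₁,Δ₁)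 P(t₂,Δ₂) = 0; in particular P(t₁,Δ₁) and P(t₂,Δ₂) commute. -/
/-!
Strong causality places `P(t₁,Δ₁)` below `P(t₂,Δ')`, where `Δ'` is `Δ₁` inflated by `|t₁ - t₂|`.
Spacelike separation makes the bounded set `Δ'` disjoint from `Δ₂`, so localizability at the
single time `t₂` gives `P(t₂,Δ') P(t₂,Δ₂) = 0`. For projections `p ≤ q` means `p = p q`, hence
`P(t₁,Δ₁) P(t₂,Δ₂) = P(t₁,Δ₁) P(t₂,Δ') P(t₂,Δ₂) = 0`; taking adjoints, the product in the other
order vanishes too.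
-/

open Bornology Metric

lemma IsSelfAdjoint.mul_eq_zero_symm {R : Type*} [NonUnitalSemiring R] [StarRing R] {a b : R}
    (ha : IsSelfAdjoint a) (hb : IsSelfAdjoint b) (hab : a * b = 0) : b * a = 0 := by
  simpa [ha.star_eq, hb.star_eq] using congr_arg star hab

lemma IsStarProjection.mul_eq_zero_of_le {A : Type*} [NonUnitalCStarAlgebra A] [PartialOrder A]
    [StarOrderedRing A] {p q a : A} (hp : IsStarProjection p) (hq : IsStarProjection q)
    (hpq : p ≤ q) (hqa : q * a = 0) : p * a = 0 := by
  rw [← (hp.le_iff_mul_eq_left hq).mp hpq, mul_assoc, hqa, mul_zero]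

section InflatedSet

variable {α : Type*} [PseudoMetricSpace α] {s t : Set α}

lemma Metric.isBounded_setOf_infDist_le (hs : IsBounded s) (hne : s.Nonempty) (r : ℝ) :
    IsBounded {x | infDist x s ≤ r} := by
  obtain ⟨x₀, hx₀⟩ := hne
  refine (isBounded_closedBall (x := x₀) (r := r + diam s)).subset fun x (hx : _ ≤ r) => ?_
  calc dist x x₀ ≤ infDist x s + diam s := dist_le_infDist_add_diam hs hx₀
    _ ≤ r + diam s := by gcongr

lemma Metric.setOf_infDist_le_inter_eq_empty (hne : s.Nonempty) {r d : ℝ} (hrd : r < d)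
    (hst : ∀ x ∈ s, ∀ y ∈ t, d ≤ dist x y) : {x | infDist x s ≤ r} ∩ t = ∅ := by
  refine Set.eq_empty_of_forall_notMem fun y ⟨(hy : _ ≤ r), hyt⟩ => ?_
  have hdy : d ≤ infDist y s := (le_infDist hne).2 fun x hx => dist_comm x y ▸ hst x hx y hyt
  linarith

end InflatedSet

/-- **Strong causality implies local commutativity for sharp localization.**
If a projection-valued localization `(t, Δ) ↦ P(t,Δ)` satisfies localizability
(`P(t,Δ₁) P(t,Δ₂) = 0` for disjoint `Δ₁, Δ₂`) and strong causality
(`P(t,Δ) ≤ P(t', Δ_{|t'−t|})` for the inflated set `Δ_s = {x | dist(x,Δ) ≤ s}`),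
then for spacelike separated sets `P(t₁,Δ₁) P(t₂,Δ₂) = 0`; in particular the two
projections commute. -/
theorem strong_causality_implies_local_commutativity
    {H : Type*} [NormedAddCommGroup H] [InnerProductSpace ℂ H] [CompleteSpace H]
    (P : ℝ → Set (EuclideanSpace ℝ (Fin 3)) → (H →L[ℂ] H))
    -- each P(t,Δ) is an orthogonal projection
    (hproj : ∀ (t : ℝ) (Δ : Set (EuclideanSpace ℝ (Fin 3))), IsBounded Δ →
      IsSelfAdjoint (P t Δ) ∧ P t Δ * P t Δ = P t Δ)
    -- localizability
    (hloc : ∀ (t : ℝ) (Δ₁ Δ₂ : Set (EuclideanSpace ℝ (Fin 3))),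
      IsBounded Δ₁ → IsBounded Δ₂ → Δ₁ ∩ Δ₂ = ∅ → P t Δ₁ * P t Δ₂ = 0)
    -- strong causality
    (hsc : ∀ (t t' : ℝ) (Δ : Set (EuclideanSpace ℝ (Fin 3))), IsBounded Δ →
      P t Δ ≤ P t' {x | Metric.infDist x Δ ≤ |t' - t|}) :
    ∀ (t₁ t₂ : ℝ) (Δ₁ Δ₂ : Set (EuclideanSpace ℝ (Fin 3))),
      IsBounded Δ₁ → IsBounded Δ₂ →
      (∃ d : ℝ, |t₁ - t₂| < d ∧ ∀ x ∈ Δ₁, ∀ y ∈ Δ₂, d ≤ dist x y) →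
      P t₁ Δ₁ * P t₂ Δ₂ = 0 ∧ P t₁ Δ₁ * P t₂ Δ₂ = P t₂ Δ₂ * P t₁ Δ₁ := by
  intro t₁ t₂ Δ₁ Δ₂ hb₁ hb₂ ⟨d, hd, hsep⟩
  have hP : ∀ t Δ, IsBounded Δ → IsStarProjection (P t Δ) :=
    fun t Δ hΔ => ⟨(hproj t Δ hΔ).2, (hproj t Δ hΔ).1⟩
  have hzero : P t₁ Δ₁ * P t₂ Δ₂ = 0 := by
    rcases Δ₁.eq_empty_or_nonempty with rfl | hne
    · have hempty : P t₁ ∅ = 0 :=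
        (hP t₁ ∅ hb₁).isIdempotentElem.symm.trans (hloc t₁ ∅ ∅ hb₁ hb₁ (Set.inter_self ∅))
      rw [hempty, zero_mul]
    · have hbS := isBounded_setOf_infDist_le hb₁ hne |t₂ - t₁|
      have hdisj := setOf_infDist_le_inter_eq_empty hne (abs_sub_comm t₂ t₁ ▸ hd) hsep
      exact (hP t₁ Δ₁ hb₁).mul_eq_zero_of_le (hP t₂ _ hbS) (hsc t₁ t₂ Δ₁ hb₁)
        (hloc t₂ _ Δ₂ hbS hb₂ hdisj)
  have hzero' := (hproj t₁ Δ₁ hb₁).1.mul_eq_zero_symm (hproj t₂ Δ₂ hb₂).1 hzero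
  exact ⟨hzero, hzero.trans hzero'.symm⟩
end
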